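/- (Folded Gaussian smoothing certificate) Let ε₀ = |N(0, σ²)| be a folded Gaussian on ℝ_{≥0} and ε₁ = α + ε₀ for α > 0. Let h : X → [0,1]^C be measurable, φ a transform, g^ε(x) = E[h(φ(x,ε))], and suppose g^{ε₀}(x)_{k_A} ≥ p_A ≥ p_B ≥ max_{k ≠ k_A} g^{ε₀}(x)_k. If α < σ·(Φ⁻¹((1 + min{p_A, 1−p_B})/2) − Φ⁻¹(3/4)), then g^{ε₁}(x)_{k_A} > max_{k ≠ k_A} g^{ε₁}(x)_k. -/

import Mathlib

open MeasureTheory ProbabilityTheory Real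

/-- The standard normal CDF. -/
noncomputable def stdNormalCDF : ℝ → ℝ := fun x => cdf (gaussianReal 0 1) x

/-- Generalized inverse of the standard normal CDF. -/
noncomputable def stdNormalCDFInv (p : ℝ) : ℝ := sInf {x : ℝ | p ≤ stdNormalCDF x}

/-- The folded Gaussian distribution `|N(0, σ²)|`, as a measure on `ℝ`. -/
noncomputable def foldedGaussianMeas (σ : ℝ) : Measure ℝ :=
  volume.withDensity fun z =>
    ENNReal.ofReal
      (if 0 ≤ z then (2 / (Real.sqrt (2 * π) * σ)) * Real.exp (-(z ^ 2) / (2 * σ ^ 2)) else 0)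

/-!
Shifting `|N(0, σ²)|` by `α` multiplies its density by `exp ((2αz - α²) / (2σ²))` on `[α, ∞)` and
kills it on `[0, α)`, so the likelihood ratio of the shifted law to the unshifted one is
nondecreasing. By the Neyman–Pearson lemma, among `[0, 1]`-valued tests of mass at least `m` under
the folded Gaussian, the lower tail `(-∞, t]` with `F t = m` has the least mass under the shifted
law, namely `F (t - α)`. For `t = σ Φ⁻¹((1 + m) / 2)` the radius condition gives
`(t - α) / σ > Φ⁻¹(3/4)`, hence `F (t - α) = 2 Φ ((t - α) / σ) - 1 > 1 / 2`. Applied to `h_{kA}`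
and to `1 - h_k` with `m = min pA (1 - pB)`, this puts the two smoothed scores on opposite sides
of `1 / 2`.
-/

open Set
open scoped NNReal

lemma integral_one_sub_of_mem_Icc {Ω : Type*} [MeasurableSpace Ω] {μ : Measure Ω}
    [IsProbabilityMeasure μ] {H : Ω → ℝ} (hH : Measurable H) (hH01 : ∀ ω, H ω ∈ Icc 0 1) :
    ∫ ω, 1 - H ω ∂μ = 1 - ∫ ω, H ω ∂μ := by
  have hint : Integrable H μ := .of_bound hH.aestronglyMeasurable 1 <| ae_of_all _ fun ω => by
    rw [Real.norm_eq_abs, abs_le]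
    exact ⟨by linarith [(hH01 ω).1], (hH01 ω).2⟩
  rw [integral_sub (integrable_const 1) hint, integral_const, probReal_univ, one_smul]

/-- Neyman–Pearson: `(H - 𝟙_A) * (g - ρ * f)` is pointwise nonnegative. -/
theorem setIntegral_add_mul_sub_le_integral_mul {Ω : Type*} [MeasurableSpace Ω] {μ : Measure Ω}
    {f g H : Ω → ℝ} {A : Set Ω} {ρ : ℝ} (hA : MeasurableSet A) (hf : Integrable f μ)
    (hg : Integrable g μ) (hH : AEStronglyMeasurable H μ) (hH01 : ∀ ω, H ω ∈ Icc 0 1)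
    (hgA : ∀ ω ∈ A, g ω ≤ ρ * f ω) (hgAc : ∀ ω ∉ A, ρ * f ω ≤ g ω) :
    ∫ ω in A, g ω ∂μ + ρ * (∫ ω, H ω * f ω ∂μ - ∫ ω in A, f ω ∂μ) ≤ ∫ ω, H ω * g ω ∂μ := by
  have hHbound : ∀ᵐ ω ∂μ, ‖H ω‖ ≤ 1 := ae_of_all _ fun ω => by
    rw [Real.norm_eq_abs, abs_le]
    exact ⟨by linarith [(hH01 ω).1], (hH01 ω).2⟩
  have hHf : Integrable (fun ω => H ω * f ω) μ := hf.bdd_mul hH hHbound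
  have hHg : Integrable (fun ω => H ω * g ω) μ := hg.bdd_mul hH hHbound
  have hpos : 0 ≤ ∫ ω, (H ω * g ω - A.indicator g ω) - ρ * (H ω * f ω - A.indicator f ω) ∂μ := by
    refine integral_nonneg fun ω => ?_
    by_cases hω : ω ∈ A
    · have := mul_nonneg_of_nonpos_of_nonpos (sub_nonpos.2 (hH01 ω).2) (sub_nonpos.2 (hgA ω hω))
      simp only [indicator_of_mem hω, Pi.zero_apply]
      linarith
    · have := mul_nonneg (hH01 ω).1 (sub_nonneg.2 (hgAc ω hω))
      simp only [indicator_of_notMem hω, Pi.zero_apply]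
      linarith
  rw [integral_sub, integral_const_mul, integral_sub hHg (hg.indicator hA),
    integral_sub hHf (hf.indicator hA), integral_indicator hA, integral_indicator hA] at hpos
  · linarith
  · exact hHg.sub (hg.indicator hA)
  · exact (hHf.sub (hf.indicator hA)).const_mul ρ

lemma setIntegral_Iic_comp_sub_right {E : Type*} [NormedAddCommGroup E] [NormedSpace ℝ E]
    (f : ℝ → E) (t α : ℝ) : ∫ z in Iic t, f (z - α) = ∫ z in Iic (t - α), f z := by
  rw [← integral_indicator measurableSet_Iic, ← integral_indicator measurableSet_Iic,
    ← integral_sub_right_eq_self ((Iic (t - α)).indicator f) α]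
  congr with z
  simp only [indicator, mem_Iic, sub_le_sub_iff_right]

lemma stdNormalCDF_eq_setIntegral (b : ℝ) :
    stdNormalCDF b = ∫ x in Iic b, gaussianPDFReal 0 1 x := by
  rw [stdNormalCDF, cdf_eq_real, measureReal_def, gaussianReal_apply_eq_integral 0 one_ne_zero,
    ENNReal.toReal_ofReal
      (setIntegral_nonneg measurableSet_Iic fun x _ => gaussianPDFReal_nonneg 0 1 x)]

lemma stdNormalCDF_sub_stdNormalCDF (a b : ℝ) :
    stdNormalCDF b - stdNormalCDF a = ∫ x in a..b, gaussianPDFReal 0 1 x := by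
  rw [stdNormalCDF_eq_setIntegral, stdNormalCDF_eq_setIntegral,
    intervalIntegral.integral_Iic_sub_Iic (integrable_gaussianPDFReal 0 1).integrableOn
      (integrable_gaussianPDFReal 0 1).integrableOn]

lemma stdNormalCDF_strictMono : StrictMono stdNormalCDF := fun a b hab => by
  have := intervalIntegral.intervalIntegral_pos_of_pos
    (integrable_gaussianPDFReal 0 1).intervalIntegrable
    (fun x => gaussianPDFReal_pos 0 1 x one_ne_zero) hab
  linarith [stdNormalCDF_sub_stdNormalCDF a b]

lemma continuous_stdNormalCDF : Continuous stdNormalCDF := by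
  have h : stdNormalCDF = fun b => stdNormalCDF 0 + ∫ x in (0 : ℝ)..b, gaussianPDFReal 0 1 x := by
    funext b
    linarith [stdNormalCDF_sub_stdNormalCDF 0 b]
  rw [h]
  exact continuous_const.add (intervalIntegral.continuous_primitive
    (fun _ _ => (integrable_gaussianPDFReal 0 1).intervalIntegrable) 0)

lemma stdNormalCDF_lt_one (x : ℝ) : stdNormalCDF x < 1 :=
  (stdNormalCDF_strictMono (lt_add_one x)).trans_le (cdf_le_one _ _)

lemma setIntegral_gaussianPDFReal_Ioi_zero {v : ℝ≥0} (hv : v ≠ 0) :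
    ∫ x in Ioi 0, gaussianPDFReal 0 v x = 1 / 2 := by
  have hsymm : ∫ x in Iic 0, gaussianPDFReal 0 v x = ∫ x in Ioi 0, gaussianPDFReal 0 v x := by
    simpa [gaussianPDFReal, neg_sq] using integral_comp_neg_Iic 0 (gaussianPDFReal 0 v)
  have htotal := intervalIntegral.integral_Iic_add_Ioi (b := 0)
    (integrable_gaussianPDFReal 0 v).integrableOn (integrable_gaussianPDFReal 0 v).integrableOn
  rw [integral_gaussianPDFReal_eq_one 0 hv] at htotal
  linarith

lemma stdNormalCDF_zero : stdNormalCDF 0 = 1 / 2 := by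
  have htotal := intervalIntegral.integral_Iic_add_Ioi (b := 0)
    (integrable_gaussianPDFReal 0 1).integrableOn (integrable_gaussianPDFReal 0 1).integrableOn
  rw [integral_gaussianPDFReal_eq_one 0 one_ne_zero,
    setIntegral_gaussianPDFReal_Ioi_zero one_ne_zero] at htotal
  rw [stdNormalCDF_eq_setIntegral]
  linarith

lemma stdNormalCDFInv_of_one_le {p : ℝ} (hp : 1 ≤ p) : stdNormalCDFInv p = 0 := by
  have hempty : {x : ℝ | p ≤ stdNormalCDF x} = ∅ :=
    eq_empty_of_forall_notMem fun x hx => (stdNormalCDF_lt_one x).not_ge (hp.trans hx)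
  rw [stdNormalCDFInv, hempty, Real.sInf_empty]

lemma stdNormalCDF_stdNormalCDFInv {p : ℝ} (h0 : 0 < p) (h1 : p < 1) :
    stdNormalCDF (stdNormalCDFInv p) = p := by
  obtain ⟨a, ha⟩ := ((tendsto_cdf_atBot _).eventually (eventually_le_nhds h0)).exists
  obtain ⟨b, hb⟩ := ((tendsto_cdf_atTop _).eventually (eventually_ge_nhds h1)).exists
  obtain ⟨x, rfl⟩ := intermediate_value_univ a b continuous_stdNormalCDF ⟨ha, hb⟩
  have hset : {y : ℝ | stdNormalCDF x ≤ stdNormalCDF y} = Ici x :=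
    Set.ext fun y => stdNormalCDF_strictMono.le_iff_le
  rw [stdNormalCDFInv, hset, csInf_Ici]

noncomputable def foldedGaussianPDF (σ : ℝ) : ℝ → ℝ :=
  (Ici 0).indicator fun z => 2 / σ * gaussianPDFReal 0 1 (z / σ)

section FoldedGaussian

variable {σ : ℝ}

lemma foldedGaussianMeas_eq_withDensity (hσ : 0 < σ) :
    foldedGaussianMeas σ = volume.withDensity fun z => ENNReal.ofReal (foldedGaussianPDF σ z) := by
  rw [foldedGaussianMeas]
  congr with z
  by_cases hz : 0 ≤ z
  · rw [foldedGaussianPDF, indicator_of_mem (show z ∈ Ici 0 from hz), if_pos hz, gaussianPDFReal]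
    push_cast
    field_simp
    ring_nf
  · rw [foldedGaussianPDF, indicator_of_notMem (show z ∉ Ici 0 from hz), if_neg hz]

lemma foldedGaussianPDF_nonneg (hσ : 0 ≤ σ) (z : ℝ) : 0 ≤ foldedGaussianPDF σ z :=
  indicator_nonneg (fun _ _ => mul_nonneg (by positivity) (gaussianPDFReal_nonneg 0 1 _)) z

lemma measurable_foldedGaussianPDF : Measurable (foldedGaussianPDF σ) :=
  ((measurable_gaussianPDFReal 0 1).comp (measurable_id.div_const σ)).const_mul _
    |>.indicator measurableSet_Ici

lemma integrable_foldedGaussianPDF (hσ : σ ≠ 0) : Integrable (foldedGaussianPDF σ) :=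
  (((integrable_gaussianPDFReal 0 1).comp_div hσ).const_mul _).indicator measurableSet_Ici

lemma integral_foldedGaussianPDF (hσ : 0 < σ) : ∫ z, foldedGaussianPDF σ z = 1 := by
  simp_rw [foldedGaussianPDF, integral_indicator measurableSet_Ici, integral_Ici_eq_integral_Ioi,
    integral_const_mul, div_eq_inv_mul _ σ]
  rw [integral_comp_mul_left_Ioi _ 0 (inv_pos.2 hσ), mul_zero,
    setIntegral_gaussianPDFReal_Ioi_zero one_ne_zero, smul_eq_mul, inv_inv]
  field_simp

lemma isProbabilityMeasure_foldedGaussianMeas (hσ : 0 < σ) :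
    IsProbabilityMeasure (foldedGaussianMeas σ) := by
  refine ⟨?_⟩
  rw [foldedGaussianMeas_eq_withDensity hσ, withDensity_apply _ MeasurableSet.univ,
    Measure.restrict_univ,
    ← ofReal_integral_eq_lintegral_ofReal (integrable_foldedGaussianPDF hσ.ne')
      (ae_of_all _ (foldedGaussianPDF_nonneg hσ.le)),
    integral_foldedGaussianPDF hσ, ENNReal.ofReal_one]

lemma integral_foldedGaussianMeas (hσ : 0 < σ) (G : ℝ → ℝ) :
    ∫ z, G z ∂foldedGaussianMeas σ = ∫ z, G z * foldedGaussianPDF σ z := by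
  rw [foldedGaussianMeas_eq_withDensity hσ, integral_withDensity_eq_integral_toReal_smul
    measurable_foldedGaussianPDF.ennreal_ofReal (ae_of_all _ fun _ => ENNReal.ofReal_lt_top)]
  simp_rw [ENNReal.toReal_ofReal (foldedGaussianPDF_nonneg hσ.le _), smul_eq_mul, mul_comm]

lemma integral_comp_const_add_foldedGaussianMeas (hσ : 0 < σ) (α : ℝ) (G : ℝ → ℝ) :
    ∫ z, G (α + z) ∂foldedGaussianMeas σ = ∫ z, G z * foldedGaussianPDF σ (z - α) := by
  rw [integral_foldedGaussianMeas hσ,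
    ← integral_add_left_eq_self (fun z => G z * foldedGaussianPDF σ (z - α)) α]
  simp_rw [add_sub_cancel_left]

lemma measureReal_foldedGaussianMeas (hσ : 0 < σ) {s : Set ℝ} (hs : MeasurableSet s) :
    (foldedGaussianMeas σ).real s = ∫ z in s, foldedGaussianPDF σ z := by
  rw [← integral_indicator_one hs, integral_foldedGaussianMeas hσ, ← integral_indicator hs]
  congr with z
  by_cases hz : z ∈ s <;> simp [hz]

lemma measureReal_foldedGaussianMeas_Iic (hσ : 0 < σ) {u : ℝ} (hu : 0 ≤ u) :
    (foldedGaussianMeas σ).real (Iic u) = 2 * stdNormalCDF (u / σ) - 1 := by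
  rw [measureReal_foldedGaussianMeas hσ measurableSet_Iic, foldedGaussianPDF,
    setIntegral_indicator measurableSet_Ici, Iic_inter_Ici, integral_Icc_eq_integral_Ioc,
    ← intervalIntegral.integral_of_le hu, intervalIntegral.integral_const_mul,
    intervalIntegral.integral_comp_div _ hσ.ne', zero_div, ← stdNormalCDF_sub_stdNormalCDF,
    stdNormalCDF_zero, smul_eq_mul]
  field_simp

lemma foldedGaussianPDF_sub {α z : ℝ} (hα : 0 ≤ α) (hz : α ≤ z) :
    foldedGaussianPDF σ (z - α) =
      exp ((2 * α * z - α ^ 2) / (2 * σ ^ 2)) * foldedGaussianPDF σ z := by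
  rw [foldedGaussianPDF, indicator_of_mem (show z - α ∈ Ici 0 from sub_nonneg.2 hz),
    indicator_of_mem (show z ∈ Ici 0 from hα.trans hz), gaussianPDFReal, gaussianPDFReal,
    mul_left_comm (exp _), mul_left_comm (exp _), ← exp_add]
  congr 4
  push_cast
  ring

lemma foldedGaussianPDF_sub_le (hσ : 0 ≤ σ) {α t z : ℝ} (hα : 0 ≤ α) (hzt : z ≤ t) :
    foldedGaussianPDF σ (z - α) ≤
      exp ((2 * α * t - α ^ 2) / (2 * σ ^ 2)) * foldedGaussianPDF σ z := by
  rcases lt_or_ge (z - α) 0 with hz | hz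
  · rw [foldedGaussianPDF, indicator_of_notMem (show z - α ∉ Ici 0 from not_le.2 hz)]
    exact mul_nonneg (exp_pos _).le (foldedGaussianPDF_nonneg hσ z)
  · rw [foldedGaussianPDF_sub hα (sub_nonneg.1 hz)]
    gcongr
    exact foldedGaussianPDF_nonneg hσ z

lemma le_foldedGaussianPDF_sub (hσ : 0 ≤ σ) {α t z : ℝ} (hα : 0 ≤ α) (hαt : α ≤ t)
    (htz : t ≤ z) :
    exp ((2 * α * t - α ^ 2) / (2 * σ ^ 2)) * foldedGaussianPDF σ z ≤
      foldedGaussianPDF σ (z - α) := by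
  rw [foldedGaussianPDF_sub hα (hαt.trans htz)]
  gcongr
  exact foldedGaussianPDF_nonneg hσ z

theorem measureReal_Iic_sub_le_integral_comp_const_add (hσ : 0 < σ) {α t : ℝ} (hα : 0 ≤ α)
    (hαt : α ≤ t) {H : ℝ → ℝ} (hH : Measurable H) (hH01 : ∀ z, H z ∈ Icc 0 1)
    (ht : (foldedGaussianMeas σ).real (Iic t) ≤ ∫ z, H z ∂foldedGaussianMeas σ) :
    (foldedGaussianMeas σ).real (Iic (t - α)) ≤ ∫ z, H (α + z) ∂foldedGaussianMeas σ := by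
  have hNP := setIntegral_add_mul_sub_le_integral_mul measurableSet_Iic
    (integrable_foldedGaussianPDF hσ.ne') ((integrable_foldedGaussianPDF hσ.ne').comp_sub_right α)
    hH.aestronglyMeasurable hH01 (fun z hz => foldedGaussianPDF_sub_le hσ.le hα hz)
    (fun z hz => le_foldedGaussianPDF_sub hσ.le hα hαt (not_le.1 hz).le)
  rw [setIntegral_Iic_comp_sub_right, ← measureReal_foldedGaussianMeas hσ measurableSet_Iic,
    ← measureReal_foldedGaussianMeas hσ measurableSet_Iic, ← integral_foldedGaussianMeas hσ,
    ← integral_comp_const_add_foldedGaussianMeas hσ] at hNP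
  nlinarith [exp_pos ((2 * α * t - α ^ 2) / (2 * σ ^ 2))]

theorem half_lt_integral_comp_const_add (hσ : 0 < σ) {α m : ℝ} (hα : 0 < α) (hm0 : 0 ≤ m)
    (hm1 : m ≤ 1)
    (hrad : α < σ * (stdNormalCDFInv ((1 + m) / 2) - stdNormalCDFInv (3 / 4)))
    {H : ℝ → ℝ} (hH : Measurable H) (hH01 : ∀ z, H z ∈ Icc 0 1)
    (hHm : m ≤ ∫ z, H z ∂foldedGaussianMeas σ) :
    1 / 2 < ∫ z, H (α + z) ∂foldedGaussianMeas σ := by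
  set c := stdNormalCDFInv ((1 + m) / 2)
  set d := stdNormalCDFInv (3 / 4)
  have hΦd : stdNormalCDF d = 3 / 4 := stdNormalCDF_stdNormalCDFInv (by norm_num) (by norm_num)
  have hd : 0 < d := stdNormalCDF_strictMono.lt_iff_lt.1 (by rw [stdNormalCDF_zero, hΦd]; norm_num)
  have hdc : d < (σ * c - α) / σ := by rw [lt_div_iff₀ hσ]; linarith
  have hm_lt_one : m < 1 := by
    refine lt_of_le_of_ne hm1 fun hm => ?_
    have hc : c = 0 := stdNormalCDFInv_of_one_le (by linarith)
    rw [hc] at hrad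
    nlinarith
  have hΦc : stdNormalCDF c = (1 + m) / 2 :=
    stdNormalCDF_stdNormalCDFInv (by linarith) (by linarith)
  have hαc : α ≤ σ * c := by nlinarith
  have hFc : (foldedGaussianMeas σ).real (Iic (σ * c)) = m := by
    rw [measureReal_foldedGaussianMeas_Iic hσ (hα.le.trans hαc), mul_div_cancel_left₀ _ hσ.ne',
      hΦc]
    ring
  have hFcα := measureReal_Iic_sub_le_integral_comp_const_add hσ hα.le hαc hH hH01 (hFc ▸ hHm)
  rw [measureReal_foldedGaussianMeas_Iic hσ (sub_nonneg.2 hαc)] at hFcα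
  linarith [stdNormalCDF_strictMono hdc]

theorem integral_comp_const_add_lt_half (hσ : 0 < σ) {α m : ℝ} (hα : 0 < α) (hm0 : 0 ≤ m)
    (hm1 : m ≤ 1)
    (hrad : α < σ * (stdNormalCDFInv ((1 + m) / 2) - stdNormalCDFInv (3 / 4)))
    {H : ℝ → ℝ} (hH : Measurable H) (hH01 : ∀ z, H z ∈ Icc 0 1)
    (hHm : ∫ z, H z ∂foldedGaussianMeas σ ≤ 1 - m) :
    ∫ z, H (α + z) ∂foldedGaussianMeas σ < 1 / 2 := by
  have := isProbabilityMeasure_foldedGaussianMeas hσ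
  have h := half_lt_integral_comp_const_add hσ hα hm0 hm1 hrad (H := fun z => 1 - H z)
    (measurable_const.sub hH) (fun z => Icc.mem_iff_one_sub_mem.1 (hH01 z))
    (by rw [integral_one_sub_of_mem_Icc hH hH01]; linarith)
  rw [integral_one_sub_of_mem_Icc (H := fun z => H (α + z)) (hH.comp (measurable_const_add α))
    fun z => hH01 _] at h
  linarith

end FoldedGaussian

theorem stmt_10_general {X : Type*} {C : ℕ}
    (σ : ℝ) (hσ : 0 < σ)
    (h : X → Fin C → ℝ) (hhb : ∀ y k, h y k ∈ Set.Icc (0 : ℝ) 1)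
    (φ : X → ℝ → X) (x : X) (α : ℝ) (hα : 0 < α)
    (hmeas : ∀ k, Measurable fun z : ℝ => h (φ x z) k)
    (g₀ g₁ : Fin C → ℝ)
    (hg₀ : g₀ = fun k => ∫ z, h (φ x z) k ∂(foldedGaussianMeas σ))
    (hg₁ : g₁ = fun k => ∫ z, h (φ x (α + z)) k ∂(foldedGaussianMeas σ))
    (kA : Fin C) (pA pB : ℝ)
    (hpB0 : 0 ≤ pB) (hpA1 : pA ≤ 1) (hAB : pB ≤ pA)
    (hconfA : pA ≤ g₀ kA) (hconfB : ∀ k, k ≠ kA → g₀ k ≤ pB)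
    (hrad : α < σ * (stdNormalCDFInv ((1 + min pA (1 - pB)) / 2) -
      stdNormalCDFInv (3 / 4))) :
    ∀ k, k ≠ kA → g₁ k < g₁ kA := by
  intro k hk
  subst hg₀ hg₁
  have hm0 : 0 ≤ min pA (1 - pB) := le_min (hpB0.trans hAB) (by linarith)
  have hm1 : min pA (1 - pB) ≤ 1 := (min_le_left _ _).trans hpA1
  have hA := half_lt_integral_comp_const_add hσ hα hm0 hm1 hrad (hmeas kA) (fun z => hhb _ kA)
    ((min_le_left _ _).trans hconfA)
  have hB := integral_comp_const_add_lt_half hσ hα hm0 hm1 hrad (hmeas k) (fun z => hhb _ k)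
    ((hconfB k hk).trans (by linarith [min_le_right pA (1 - pB)]))
  exact hB.trans hA

/-- folded Gaussian smoothing certificate. -/
theorem stmt_10 {X : Type*} [MeasurableSpace X] {C : ℕ} (hC : 2 ≤ C)
    (σ : ℝ) (hσ : 0 < σ)
    (h : X → Fin C → ℝ) (hhb : ∀ y k, h y k ∈ Set.Icc (0 : ℝ) 1)
    (φ : X → ℝ → X) (x : X) (α : ℝ) (hα : 0 < α)
    (hmeas : ∀ k, Measurable fun z : ℝ => h (φ x z) k)
    (g₀ g₁ : Fin C → ℝ)
    (hg₀ : g₀ = fun k => ∫ z, h (φ x z) k ∂(foldedGaussianMeas σ))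
    (hg₁ : g₁ = fun k => ∫ z, h (φ x (α + z)) k ∂(foldedGaussianMeas σ))
    (kA : Fin C) (pA pB : ℝ)
    (hpB0 : 0 ≤ pB) (hpA1 : pA ≤ 1) (hAB : pB ≤ pA)
    (hconfA : pA ≤ g₀ kA) (hconfB : ∀ k, k ≠ kA → g₀ k ≤ pB)
    (hrad : α < σ * (stdNormalCDFInv ((1 + min pA (1 - pB)) / 2) -
      stdNormalCDFInv (3 / 4))) :
    ∀ k, k ≠ kA → g₁ k < g₁ kA :=
  stmt_10_general σ hσ h hhb φ x α hα hmeas g₀ g₁ hg₀ hg₁ kA pA pB hpB0 hpA1 hAB hconfA hconfB hrad
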